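/- arXiv:2010.14371 — 4 statements merged into one kernel-verified Lean document; each statement's English description precedes it below -/
import Mathlib

section
/- Given arbitrary values g_1,...,g_{n-1} ∈ G = (Z/p)^r, there exists a unique map λ on the set {L̄_1,...,L̄_n, E_1,...,E_m} with λ(L̄_i)=g_i for i < n satisfying the divisibility condition, namely λ(L̄_n) = -Σ_{i=1}^{n-1} g_i and λ(E_ν) = Σ_{i : p_ν ∈ L_i} λ(L̄_i). -/
open Finset

/-- The divisibility condition for a labeling `lam` of the `n+1` strict transforms
`L̄_i` (indexed by `Fin (n+1)`, via `Sum.inl`) and the `m` exceptional divisors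
`E_ν` (indexed by `Fin m`, via `Sum.inr`) by elements of `G = (ℤ/p)^r`:
for every character `χ ∈ G^∨`, the divisor `Σ_D ⟨⟨χ, λ(D)⟩⟩ D` is divisible by `p`
in `Pic S ≅ ℤ^{m+1}`.  In the basis `σ*H, E_1, …, E_m`, the class of `L̄_i` is
`σ*H - Σ_{ν : p_ν ∈ L_i} E_ν` and the class of `E_ν` is `E_ν`; so the coefficient
of `σ*H` is `Σ_i ⟨⟨χ, λ(L̄_i)⟩⟩` and the coefficient of `E_ν` is
`⟨⟨χ, λ(E_ν)⟩⟩ - Σ_{i : p_ν ∈ L_i} ⟨⟨χ, λ(L̄_i)⟩⟩`, where `inc ν` is the set of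
indices of the lines through `p_ν`. -/
def DivCond (p r n m : ℕ) (inc : Fin m → Finset (Fin (n + 1)))
    (lam : (Fin (n + 1) ⊕ Fin m) → (Fin r → ZMod p)) : Prop :=
  ∀ χ : (Fin r → ZMod p) →+ ZMod p,
    ((p : ℤ) ∣ ∑ i : Fin (n + 1), ((χ (lam (Sum.inl i))).val : ℤ)) ∧
    ∀ ν : Fin m,
      (p : ℤ) ∣ (((χ (lam (Sum.inr ν))).val : ℤ) -
        ∑ i ∈ inc ν, ((χ (lam (Sum.inl i))).val : ℤ))

/-- Given arbitrary values `g_1, …, g_n ∈ G = (ℤ/p)^r` there is a unique labeling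
`λ` of the `n+1` lines and `m` exceptional divisors with `λ(L̄_i) = g_i` for
`i < n+1` (i.e. for the first `n` lines) satisfying the divisibility condition;
it is given by `λ(L̄_{n+1}) = -Σ_i g_i` and `λ(E_ν) = Σ_{i : p_ν ∈ L_i} λ(L̄_i)`. -/
theorem stmt2 (p r n m : ℕ) (hp : p.Prime)
    (inc : Fin m → Finset (Fin (n + 1)))
    (vals : Fin n → (Fin r → ZMod p)) :
    (∃! lam : (Fin (n + 1) ⊕ Fin m) → (Fin r → ZMod p),
      (∀ i : Fin n, lam (Sum.inl i.castSucc) = vals i) ∧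
        DivCond p r n m inc lam) ∧
    (∀ lam : (Fin (n + 1) ⊕ Fin m) → (Fin r → ZMod p),
      (∀ i : Fin n, lam (Sum.inl i.castSucc) = vals i) →
      DivCond p r n m inc lam →
      lam (Sum.inl (Fin.last n)) = -∑ i, vals i ∧
      ∀ ν : Fin m, lam (Sum.inr ν) = ∑ i ∈ inc ν, lam (Sum.inl i)) := by
  haveI : NeZero p := ⟨hp.ne_zero⟩
  have hsep : ∀ x : Fin r → ZMod p,
      (∀ χ : (Fin r → ZMod p) →+ ZMod p, χ x = 0) → x = 0 := by
    intro x hx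
    funext j
    exact hx (Pi.evalAddMonoidHom (fun _ => ZMod p) j)
  have hcast : ∀ (z : ℤ), (p : ℤ) ∣ z ↔ (z : ZMod p) = 0 := fun z =>
    (ZMod.intCast_zmod_eq_zero_iff_dvd z p).symm
  have key : ∀ lam : (Fin (n + 1) ⊕ Fin m) → (Fin r → ZMod p),
      DivCond p r n m inc lam ↔
      ((∑ i : Fin (n+1), lam (Sum.inl i)) = 0 ∧
       ∀ ν, lam (Sum.inr ν) = ∑ i ∈ inc ν, lam (Sum.inl i)) := by
    intro lam
    constructor
    · intro h
      constructor
      · apply hsep; intro χ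
        have h1 := (h χ).1
        rw [hcast] at h1
        push_cast at h1
        simpa [map_sum, ZMod.natCast_val, ZMod.cast_id] using h1
      · intro ν
        have hz : lam (Sum.inr ν) - ∑ i ∈ inc ν, lam (Sum.inl i) = 0 := by
          apply hsep; intro χ
          have h2 := (h χ).2 ν
          rw [hcast] at h2
          push_cast at h2
          simpa [map_sub, map_sum, ZMod.natCast_val, ZMod.cast_id] using h2
        exact sub_eq_zero.mp hz
    · intro ⟨h1, h2⟩ χ
      constructor
      · rw [hcast]
        push_cast
        have : ∑ i : Fin (n+1), (χ (lam (Sum.inl i)) : ZMod p) = χ 0 := by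
          rw [← h1, map_sum]
        simpa [ZMod.natCast_val, ZMod.cast_id] using this
      · intro ν
        rw [hcast]
        push_cast
        have : (χ (lam (Sum.inr ν)) : ZMod p) -
            ∑ i ∈ inc ν, (χ (lam (Sum.inl i)) : ZMod p) = 0 := by
          rw [h2 ν, map_sum, sub_self]
        simpa [ZMod.natCast_val, ZMod.cast_id] using this
  -- the consequence part
  have conseq : ∀ lam : (Fin (n + 1) ⊕ Fin m) → (Fin r → ZMod p),
      (∀ i : Fin n, lam (Sum.inl i.castSucc) = vals i) →
      DivCond p r n m inc lam →
      lam (Sum.inl (Fin.last n)) = -∑ i, vals i ∧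
      ∀ ν : Fin m, lam (Sum.inr ν) = ∑ i ∈ inc ν, lam (Sum.inl i) := by
    intro lam hv hd
    obtain ⟨h1, h2⟩ := (key lam).mp hd
    refine ⟨?_, h2⟩
    rw [Fin.sum_univ_castSucc] at h1
    simp only [hv] at h1
    exact eq_neg_of_add_eq_zero_right h1
  refine ⟨?_, conseq⟩
  set L : Fin (n+1) → (Fin r → ZMod p) :=
    Fin.lastCases (-∑ i, vals i) vals with hL
  set lam0 : (Fin (n + 1) ⊕ Fin m) → (Fin r → ZMod p) :=
    Sum.elim L (fun ν => ∑ i ∈ inc ν, L i) with hlam0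
  have hv0 : ∀ i : Fin n, lam0 (Sum.inl i.castSucc) = vals i := by
    intro i
    simp [hlam0, hL, Fin.lastCases_castSucc]
  have hd0 : DivCond p r n m inc lam0 := by
    rw [key]
    constructor
    · rw [Fin.sum_univ_castSucc]
      simp [hlam0, hL, Fin.lastCases_castSucc, Fin.lastCases_last]
    · intro ν
      rfl
  refine ⟨lam0, ⟨hv0, hd0⟩, ?_⟩
  intro lam ⟨hv, hd⟩
  obtain ⟨hlast, hE⟩ := conseq lam hv hd
  obtain ⟨hlast0, hE0⟩ := conseq lam0 hv0 hd0
  have hinl : ∀ i : Fin (n+1), lam (Sum.inl i) = lam0 (Sum.inl i) := by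
    intro i
    induction i using Fin.lastCases with
    | last => rw [hlast, hlast0]
    | cast i => rw [hv i, hv0 i]
  funext d
  cases d with
  | inl i => exact hinl i
  | inr ν =>
    rw [hE ν, hE0 ν]
    exact Finset.sum_congr rfl fun i _ => hinl i
end

section
/- With λ satisfying the divisibility condition, the coefficient of σ*H in L_χ = (1/p)Σ_D ⟨⟨χ,λ(D)⟩⟩ D equals ⌈(1/p) Σ_{i=1}^{n-1} ⟨⟨χ, λ(L̄_i)⟩⟩⌉. -/
/-- If the labeling `λ` of the `n+1` lines satisfies the divisibility condition
(so that `p` divides `Σ_{i=1}^{n+1} ⟨⟨χ, λ(L̄_i)⟩⟩`, which is the coefficient of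
`p·σ*H` in `p·L_χ`), then the coefficient of `σ*H` in
`L_χ = (1/p) Σ_D ⟨⟨χ, λ(D)⟩⟩ D`, namely `(1/p) Σ_{i=1}^{n+1} ⟨⟨χ, λ(L̄_i)⟩⟩`,
equals `⌈(1/p) Σ_{i=1}^{n} ⟨⟨χ, λ(L̄_i)⟩⟩⌉` (omitting the last line). -/
theorem stmt3 (p r n : ℕ) (hp : p.Prime)
    (lam : Fin (n + 1) → (Fin r → ZMod p))
    (χ : (Fin r → ZMod p) →+ ZMod p)
    (hdiv : (p : ℤ) ∣ ∑ i : Fin (n + 1), ((χ (lam i)).val : ℤ)) :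
    (∑ i : Fin (n + 1), ((χ (lam i)).val : ℤ)) / (p : ℤ) =
      ⌈(∑ i : Fin n, ((χ (lam i.castSucc)).val : ℤ) : ℚ) / (p : ℚ)⌉ := by
  have hp0 : 0 < (p : ℤ) := by exact_mod_cast hp.pos
  have hpQ : 0 < (p : ℚ) := by exact_mod_cast hp.pos
  haveI : NeZero p := ⟨hp.ne_zero⟩
  set s : ℤ := ∑ i : Fin n, ((χ (lam i.castSucc)).val : ℤ) with hs
  set t : ℤ := ((χ (lam (Fin.last n))).val : ℤ) with ht
  have hsum : (∑ i : Fin (n + 1), ((χ (lam i)).val : ℤ)) = s + t := by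
    rw [Fin.sum_univ_castSucc]
  rw [hsum] at hdiv ⊢
  obtain ⟨k, hk⟩ := hdiv
  have ht0 : 0 ≤ t := by positivity
  have htp : t < p := by rw [ht]; exact_mod_cast ZMod.val_lt (χ (lam (Fin.last n)))
  have hsk : s = p * k - t := by omega
  have hQ : ((s : ℤ) : ℚ) = (∑ i : Fin n, (((χ (lam i.castSucc)).val : ℤ) : ℚ)) := by
    rw [hs]; push_cast; ring
  rw [hk, Int.mul_ediv_cancel_left _ hp0.ne', ← hQ]
  have hskQ : (s : ℚ) = p * k - t := by exact_mod_cast hsk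
  have ht0Q : (0 : ℚ) ≤ t := by exact_mod_cast ht0
  have htpQ : (t : ℚ) < p := by exact_mod_cast htp
  symm
  rw [Int.ceil_eq_iff]
  constructor
  · rw [lt_div_iff₀ hpQ, hskQ]; nlinarith
  · rw [div_le_iff₀ hpQ, hskQ]; nlinarith
end

section
/- With λ satisfying the divisibility condition, the coefficient of E_ν in L_χ equals -⌊(1/p) Σ_{i : p_ν ∈ L_i} ⟨⟨χ, λ(L̄_i)⟩⟩⌋; in particular this coefficient is nonpositive, and it is ≥ -(d_ν - 1) where d_ν is the number of lines through p_ν (since each term ⟨⟨χ,λ(L̄_i)⟩⟩ ≤ p-1). -/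
/-!
Write `S = Σ_{i ∈ T} ⟨⟨χ, λ(L̄_i)⟩⟩`. By additivity of `χ`, `⟨⟨χ, λ(E_ν)⟩⟩ = S mod p`, so the
coefficient `(S mod p - S) / p` is exactly `-⌊S / p⌋`. Since each of the `d_ν` summands of `S`
is below `p`, we get `S < d_ν p`, i.e. `⌊S / p⌋ ≤ d_ν - 1`.
-/

theorem Int.emod_sub_self_ediv (a b : ℤ) : (a % b - a) / b = -(a / b) := by
  rcases eq_or_ne b 0 with rfl | hb
  · simp
  rw [Int.emod_def, sub_sub_cancel_left, Int.neg_ediv_of_dvd (dvd_mul_right b _),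
    Int.mul_ediv_cancel_left _ hb]

namespace ZMod

variable {n : ℕ} [NeZero n] {ι : Type*}

theorem val_sum (s : Finset ι) (f : ι → ZMod n) :
    (∑ i ∈ s, f i).val = (∑ i ∈ s, (f i).val) % n := by
  rw [← ZMod.val_natCast n, Nat.cast_sum]
  simp only [ZMod.natCast_val, ZMod.cast_id', id]

theorem sum_val_lt_card_mul {s : Finset ι} (hs : s.Nonempty) (f : ι → ZMod n) :
    ∑ i ∈ s, (f i).val < s.card * n := by
  simpa using Finset.sum_lt_sum_of_nonempty hs fun i _ => (f i).val_lt

theorem val_sum_sub_sum_val_ediv (s : Finset ι) (f : ι → ZMod n) :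
    (((∑ i ∈ s, f i).val : ℤ) - ∑ i ∈ s, ((f i).val : ℤ)) / n =
      -((∑ i ∈ s, ((f i).val : ℤ)) / n) := by
  rw [val_sum]
  push_cast
  exact Int.emod_sub_self_ediv _ _

end ZMod

/-- The coefficient of the exceptional divisor `E_ν` in
`L_χ = (1/p) Σ_D ⟨⟨χ, λ(D)⟩⟩ D` is
`(1/p)(⟨⟨χ, λ(E_ν)⟩⟩ - Σ_{i : p_ν ∈ L_i} ⟨⟨χ, λ(L̄_i)⟩⟩)` where
`λ(E_ν) = Σ_{i : p_ν ∈ L_i} λ(L̄_i)`; it equals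
`-⌊(1/p) Σ_{i : p_ν ∈ L_i} ⟨⟨χ, λ(L̄_i)⟩⟩⌋`, is nonpositive, and is at least
`-(d_ν - 1)` where `d_ν ≥ 3` is the number of lines through the (singular)
point `p_ν`.  Here `T` is the set of indices of lines through `p_ν`. -/
theorem stmt4 (p r n : ℕ) (hp : p.Prime)
    (lam : Fin n → (Fin r → ZMod p)) (T : Finset (Fin n)) (hT : 3 ≤ T.card)
    (χ : (Fin r → ZMod p) →+ ZMod p) :
    (((χ (∑ i ∈ T, lam i)).val : ℤ) - ∑ i ∈ T, ((χ (lam i)).val : ℤ)) / (p : ℤ) =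
        -⌊(∑ i ∈ T, ((χ (lam i)).val : ℤ) : ℚ) / (p : ℚ)⌋ ∧
    (((χ (∑ i ∈ T, lam i)).val : ℤ) - ∑ i ∈ T, ((χ (lam i)).val : ℤ)) / (p : ℤ) ≤ 0 ∧
    -((T.card : ℤ) - 1) ≤
      (((χ (∑ i ∈ T, lam i)).val : ℤ) - ∑ i ∈ T, ((χ (lam i)).val : ℤ)) / (p : ℤ) := by
  have : NeZero p := ⟨hp.ne_zero⟩
  have hcoeff := ZMod.val_sum_sub_sum_val_ediv T (fun i => χ (lam i))
  rw [← map_sum] at hcoeff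
  rw [hcoeff]
  set S : ℤ := ∑ i ∈ T, ((χ (lam i)).val : ℤ)
  have hfloor : ⌊(S : ℚ) / p⌋ = S / p := Rat.floor_intCast_div_natCast S p
  have hS_lt : S < T.card * p := by
    have hT_ne : T.Nonempty := Finset.card_pos.mp (by omega)
    simp only [S]
    exact_mod_cast ZMod.sum_val_lt_card_mul hT_ne fun i => χ (lam i)
  have hS_div_lt : S / p < T.card := Int.ediv_lt_of_lt_mul (by exact_mod_cast hp.pos) hS_lt
  have hS_nonneg : 0 ≤ S := Finset.sum_nonneg fun i _ => by positivity
  refine ⟨?_, neg_nonpos.mpr (Int.ediv_nonneg hS_nonneg p.cast_nonneg), by omega⟩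
  rw [← hfloor, Int.cast_sum]
end

section
/- If p ≥ 3, n > 3p/(p-1), μ_ν < (2p-1)n/(3p) for all ν, and nd ≥ Σ_ν μ_ν s_ν with d a positive integer and s_ν nonnegative integers, then [(p-1)n-3p]d - Σ_ν[(p-1)μ_ν-(2p-1)]s_ν > 0. -/
open Finset

/-!
Put `A = (p-1)n - 3p`, which is positive because `n > 3p/(p-1)`. The bound on `μ_ν` says exactly
that each coefficient `(p-1)μ_ν - (2p-1)` is smaller than `(A/n)·μ_ν`. If all `s_ν` vanish the
claim is `A·d > 0`; otherwise the sum is strictly below `(A/n)·Σ μ_ν s_ν ≤ (A/n)·n·d = A·d`.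
-/

theorem Finset.sum_mul_lt_mul_of_lt_mul {ι K : Type*} [CommRing K] [LinearOrder K]
    [IsStrictOrderedRing K] (t : Finset ι) {c μ s : ι → K} {κ N : K} (hκ : 0 < κ) (hN : 0 < N)
    (hc : ∀ i ∈ t, c i < κ * μ i) (hs : ∀ i ∈ t, 0 ≤ s i) (hsum : ∑ i ∈ t, μ i * s i ≤ N) :
    ∑ i ∈ t, c i * s i < κ * N := by
  by_cases hzero : ∀ i ∈ t, s i = 0
  · rw [sum_eq_zero fun i hi => by rw [hzero i hi, mul_zero]]
    exact mul_pos hκ hN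
  push Not at hzero
  obtain ⟨i₀, hi₀, hsi₀⟩ := hzero
  calc ∑ i ∈ t, c i * s i < ∑ i ∈ t, κ * μ i * s i :=
        sum_lt_sum (fun i hi => mul_le_mul_of_nonneg_right (hc i hi).le (hs i hi))
          ⟨i₀, hi₀, mul_lt_mul_of_pos_right (hc i₀ hi₀) ((hs i₀ hi₀).lt_of_ne' hsi₀)⟩
    _ = κ * ∑ i ∈ t, μ i * s i := by simp_rw [mul_sum, mul_assoc]
    _ ≤ κ * N := mul_le_mul_of_nonneg_left hsum hκ.le

theorem stmt14_general (p n m : ℕ) (hp : 3 ≤ p)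
    (hn : (n : ℚ) > 3 * p / ((p : ℚ) - 1))
    (μ : Fin m → ℕ)
    (hμ : ∀ ν, (μ ν : ℚ) < (2 * (p : ℚ) - 1) * n / (3 * p))
    (d : ℕ) (hd : 0 < d) (s : Fin m → ℕ)
    (hsum : (n : ℚ) * d ≥ ∑ ν, (μ ν : ℚ) * s ν) :
    0 < (((p : ℚ) - 1) * n - 3 * p) * d -
      ∑ ν, (((p : ℚ) - 1) * μ ν - (2 * p - 1)) * s ν := by
  have hp3 : (3 : ℚ) ≤ p := by exact_mod_cast hp
  have hA : 0 < ((p : ℚ) - 1) * n - 3 * p := by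
    have := (div_lt_iff₀ (by linarith : (0 : ℚ) < p - 1)).mp hn
    linarith
  have hn0 : (0 : ℚ) < n := by nlinarith
  have hcoeff (ν : Fin m) :
      ((p : ℚ) - 1) * μ ν - (2 * p - 1) < (((p : ℚ) - 1) * n - 3 * p) / n * μ ν := by
    have hμν := (lt_div_iff₀ (by positivity : (0 : ℚ) < 3 * p)).mp (hμ ν)
    rw [div_mul_eq_mul_div, lt_div_iff₀ hn0]
    linear_combination hμν
  have key := univ.sum_mul_lt_mul_of_lt_mul (div_pos hA hn0)
    (by positivity : (0 : ℚ) < n * d) (fun ν _ => hcoeff ν) (fun ν _ => by positivity) hsum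
  rw [← mul_assoc, div_mul_cancel₀ _ hn0.ne'] at key
  linarith

/-- The key numerical step in the Nakai–Moishezon ampleness verification.
If `p ≥ 3`, `n > 3p/(p-1)`, `μ_ν < (2p-1)n/(3p)` for all `ν` (with the `μ_ν`
positive integers), `d` is a positive integer, the `s_ν` are nonnegative
integers, and `n·d ≥ Σ_ν μ_ν s_ν`, then
`[(p-1)n - 3p]·d - Σ_ν [(p-1)μ_ν - (2p-1)]·s_ν > 0`. -/
theorem stmt14 (p n m : ℕ) (hp : 3 ≤ p)
    (hn : (n : ℚ) > 3 * p / ((p : ℚ) - 1))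
    (μ : Fin m → ℕ) (hμpos : ∀ ν, 0 < μ ν)
    (hμ : ∀ ν, (μ ν : ℚ) < (2 * (p : ℚ) - 1) * n / (3 * p))
    (d : ℕ) (hd : 0 < d) (s : Fin m → ℕ)
    (hsum : (n : ℚ) * d ≥ ∑ ν, (μ ν : ℚ) * s ν) :
    0 < (((p : ℚ) - 1) * n - 3 * p) * d -
      ∑ ν, (((p : ℚ) - 1) * μ ν - (2 * p - 1)) * s ν :=
  stmt14_general p n m hp hn μ hμ d hd s hsum
end
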